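/- Let R be a ring and F a class of left R-modules closed under finite direct sums. Suppose 0 → A → B → C → 0 is an exact sequence of left R-modules which remains exact after applying Hom_R(−, F) for every F ∈ F (i.e. every homomorphism A → F extends to B). If A and C both admit F-coresolutions of length at most n (exact sequences 0 → A → F^0 → ⋯ → F^n → 0 with all F^i ∈ F, and similarly for C) in which each cosyzygy inclusion extends along the given data, then B admits an F-coresolution of length at most n. (Generalized horseshoe lemma for coresolutions.) -/
import Mathlib


noncomputable section

variable (R : Type) [Ring R]

/-- `G`, `ι`, `d` form an `F`-coresolution of `A` of length at most `n`:
an exact sequence `0 → A → G 0 → G 1 → ⋯ → G n → 0` with all terms in `F`. -/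
def IsFCoresolution (F : ModuleCat R → Prop) (n : ℕ)
    (A : Type) [AddCommGroup A] [Module R A]
    (G : ℕ → ModuleCat R) (ι : A →ₗ[R] ↥(G 0)) (d : ∀ i, ↥(G i) →ₗ[R] ↥(G (i + 1))) :
    Prop :=
  (∀ i, i ≤ n → F (G i)) ∧ (∀ i, n < i → Subsingleton ↥(G i)) ∧
    Function.Injective ι ∧ LinearMap.ker (d 0) = LinearMap.range ι ∧
    ∀ i, LinearMap.ker (d (i + 1)) = LinearMap.range (d i)

/-- The coresolution remains exact after applying `Hom_R(−, F')` for every `F' ∈ F`;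
equivalently, every homomorphism from `A` (resp. from a cosyzygy) to a module in `F`
extends to the next term of the coresolution. -/
def IsProperCoresolution (F : ModuleCat R → Prop)
    (A : Type) [AddCommGroup A] [Module R A]
    (G : ℕ → ModuleCat R) (ι : A →ₗ[R] ↥(G 0)) (d : ∀ i, ↥(G i) →ₗ[R] ↥(G (i + 1))) :
    Prop :=
  ∀ F' : ModuleCat R, F F' →
    (∀ φ : A →ₗ[R] ↥F', ∃ ψ : ↥(G 0) →ₗ[R] ↥F', ψ ∘ₗ ι = φ) ∧
    ∀ (i : ℕ) (φ : ↥(LinearMap.range (d i)) →ₗ[R] ↥F'),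
      ∃ ψ : ↥(G (i + 1)) →ₗ[R] ↥F', ψ ∘ₗ (LinearMap.range (d i)).subtype = φ

universe u

variable (R : Type) [Ring R]

/-- Universe-polymorphic version of `IsFCoresolution`. -/
def IsFCoresolutionU (F : ModuleCat.{u} R → Prop) (n : ℕ)
    (A : Type u) [AddCommGroup A] [Module R A]
    (G : ℕ → ModuleCat.{u} R) (ι : A →ₗ[R] ↥(G 0)) (d : ∀ i, ↥(G i) →ₗ[R] ↥(G (i + 1))) :
    Prop :=
  (∀ i, i ≤ n → F (G i)) ∧ (∀ i, n < i → Subsingleton ↥(G i)) ∧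
    Function.Injective ι ∧ LinearMap.ker (d 0) = LinearMap.range ι ∧
    ∀ i, LinearMap.ker (d (i + 1)) = LinearMap.range (d i)

theorem factor_through_surjective
    {M N P : Type*} [AddCommGroup M] [Module R M] [AddCommGroup N] [Module R N]
    [AddCommGroup P] [Module R P]
    (p : M →ₗ[R] N) (hp : Function.Surjective p) (f : M →ₗ[R] P)
    (h : LinearMap.ker p ≤ LinearMap.ker f) :
    ∃ g : N →ₗ[R] P, g ∘ₗ p = f := by
  let e := LinearMap.quotKerEquivOfSurjective p hp
  refine ⟨(LinearMap.ker p).liftQ f h ∘ₗ (e.symm : N →ₗ[R] _), ?_⟩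
  ext m
  have he : e.symm (p m) = Submodule.Quotient.mk m := by
    apply e.injective
    simp [e, LinearMap.quotKerEquivOfSurjective]
  simp [he, Submodule.liftQ_apply]

theorem auxStmt (F : ModuleCat.{u} R → Prop)
    (hsum : ∀ X Y : ModuleCat.{u} R, F X → F Y → F (ModuleCat.of R (↥X × ↥Y))) :
    ∀ (n : ℕ) (A B C : Type u) [AddCommGroup A] [Module R A] [AddCommGroup B] [Module R B]
      [AddCommGroup C] [Module R C]
      (i : A →ₗ[R] B) (p : B →ₗ[R] C),
      Function.Injective i → Function.Surjective p →
      LinearMap.range i = LinearMap.ker p →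
      (∀ F' : ModuleCat.{u} R, F F' → ∀ φ : A →ₗ[R] ↥F',
        ∃ ψ : B →ₗ[R] ↥F', ψ ∘ₗ i = φ) →
      ∀ (GA : ℕ → ModuleCat.{u} R) (ιA : A →ₗ[R] ↥(GA 0))
        (dA : ∀ j, ↥(GA j) →ₗ[R] ↥(GA (j + 1))),
      IsFCoresolutionU R F n A GA ιA dA →
      (∀ F' : ModuleCat.{u} R, F F' →
        (∀ φ : A →ₗ[R] ↥F', ∃ ψ : ↥(GA 0) →ₗ[R] ↥F', ψ ∘ₗ ιA = φ) ∧
        ∀ (j : ℕ) (φ : ↥(LinearMap.range (dA j)) →ₗ[R] ↥F'),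
          ∃ ψ : ↥(GA (j + 1)) →ₗ[R] ↥F', ψ ∘ₗ (LinearMap.range (dA j)).subtype = φ) →
      ∀ (GC : ℕ → ModuleCat.{u} R) (ιC : C →ₗ[R] ↥(GC 0))
        (dC : ∀ j, ↥(GC j) →ₗ[R] ↥(GC (j + 1))),
      IsFCoresolutionU R F n C GC ιC dC →
      (∀ F' : ModuleCat.{u} R, F F' →
        (∀ φ : C →ₗ[R] ↥F', ∃ ψ : ↥(GC 0) →ₗ[R] ↥F', ψ ∘ₗ ιC = φ) ∧
        ∀ (j : ℕ) (φ : ↥(LinearMap.range (dC j)) →ₗ[R] ↥F'),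
          ∃ ψ : ↥(GC (j + 1)) →ₗ[R] ↥F', ψ ∘ₗ (LinearMap.range (dC j)).subtype = φ) →
      ∃ (GB : ℕ → ModuleCat.{u} R) (ιB : B →ₗ[R] ↥(GB 0))
        (dB : ∀ j, ↥(GB j) →ₗ[R] ↥(GB (j + 1))),
        IsFCoresolutionU R F n B GB ιB dB := by
  intro n
  induction n with
  | zero =>
    intro A B C _ _ _ _ _ _ i p hi hp hexact hHomExact
      GA ιA dA hGA hGA' GC ιC dC hGC hGC'
    obtain ⟨hAF, hAsub, hιAinj, hA0, hAd⟩ := hGA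
    obtain ⟨hCF, hCsub, hιCinj, hC0, hCd⟩ := hGC
    have hιAsurj : Function.Surjective ιA := by
      rw [← LinearMap.range_eq_top, ← hA0]
      haveI := hAsub 1 one_pos
      ext x
      simp [LinearMap.mem_ker, Subsingleton.elim (dA 0 x) 0]
    have hιCsurj : Function.Surjective ιC := by
      rw [← LinearMap.range_eq_top, ← hC0]
      haveI := hCsub 1 one_pos
      ext x
      simp [LinearMap.mem_ker, Subsingleton.elim (dC 0 x) 0]
    obtain ⟨σ, hσ⟩ := hHomExact (GA 0) (hAF 0 le_rfl) ιA
    have hσ' : ∀ a, σ (i a) = ιA a := fun a => LinearMap.congr_fun hσ a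
    refine ⟨fun j => ModuleCat.of R (↥(GA j) × ↥(GC j)),
      LinearMap.prod σ (ιC ∘ₗ p), fun j => 0, ?_, ?_, ?_, ?_, ?_⟩
    · intro j hj
      have hj0 : j = 0 := Nat.le_zero.mp hj
      subst hj0
      exact hsum (GA 0) (GC 0) (hAF 0 le_rfl) (hCF 0 le_rfl)
    · intro j hj
      haveI := hAsub j hj
      haveI := hCsub j hj
      show Subsingleton (↥(GA j) × ↥(GC j))
      infer_instance
    · intro b b' hb
      have hb1 : σ b = σ b' := congrArg Prod.fst hb
      have hb2 : ιC (p b) = ιC (p b') := congrArg Prod.snd hb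
      have hpb : p b = p b' := hιCinj hb2
      have hmem : b - b' ∈ LinearMap.ker p := by
        rw [LinearMap.mem_ker, map_sub, hpb, sub_self]
      rw [← hexact] at hmem
      obtain ⟨a, ha⟩ := hmem
      have h0 : ιA a = 0 := by
        rw [← hσ' a, ha, map_sub, hb1, sub_self]
      have ha0 : a = 0 := by
        apply hιAinj; rw [h0, map_zero]
      rw [ha0, map_zero] at ha
      exact sub_eq_zero.mp ha.symm
    · show LinearMap.ker (0 : ↥(ModuleCat.of R (↥(GA 0) × ↥(GC 0))) →ₗ[R]
          ↥(ModuleCat.of R (↥(GA 1) × ↥(GC 1)))) = _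
      rw [LinearMap.ker_zero]
      symm
      rw [LinearMap.range_eq_top]
      rintro ⟨x, y⟩
      obtain ⟨c, hc⟩ := hιCsurj y
      obtain ⟨b0, hb0⟩ := hp c
      obtain ⟨a, ha⟩ := hιAsurj (x - σ b0)
      refine ⟨b0 + i a, Prod.ext ?_ ?_⟩
      · show σ (b0 + i a) = x
        rw [map_add, hσ' a, ha]
        abel
      · show ιC (p (b0 + i a)) = y
        have hpa : p (i a) = 0 := by
          have : i a ∈ LinearMap.ker p := hexact ▸ LinearMap.mem_range_self i a
          simpa using this
        rw [map_add, hpa, add_zero, hb0, hc]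
    · intro j
      haveI hs : Subsingleton (↥(ModuleCat.of R (↥(GA (j+1)) × ↥(GC (j+1))))) := by
        haveI := hAsub (j+1) (Nat.succ_pos j)
        haveI := hCsub (j+1) (Nat.succ_pos j)
        show Subsingleton (↥(GA (j+1)) × ↥(GC (j+1)))
        infer_instance
      ext w
      constructor
      · intro _
        exact ⟨0, Subsingleton.elim _ _⟩
      · intro _
        simp [LinearMap.mem_ker]
  | succ n IH =>
    intro A B C _ _ _ _ _ _ i p hi hp hexact hHomExact
      GA ιA dA hGA hGA' GC ιC dC hGC hGC'
    obtain ⟨hAF, hAsub, hιAinj, hA0, hAd⟩ := hGA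
    obtain ⟨hCF, hCsub, hιCinj, hC0, hCd⟩ := hGC
    obtain ⟨σ, hσ⟩ := hHomExact (GA 0) (hAF 0 (Nat.zero_le _)) ιA
    have hσ' : ∀ a, σ (i a) = ιA a := fun a => LinearMap.congr_fun hσ a
    set ιB : B →ₗ[R] ↥(GA 0) × ↥(GC 0) := LinearMap.prod σ (ιC ∘ₗ p) with hιB
    have hιBinj : Function.Injective ιB := by
      intro b b' hb
      have hb1 : σ b = σ b' := congrArg Prod.fst hb
      have hb2 : ιC (p b) = ιC (p b') := congrArg Prod.snd hb
      have hpb : p b = p b' := hιCinj hb2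
      have hmem : b - b' ∈ LinearMap.ker p := by
        rw [LinearMap.mem_ker, map_sub, hpb, sub_self]
      rw [← hexact] at hmem
      obtain ⟨a, ha⟩ := hmem
      have h0 : ιA a = 0 := by
        rw [← hσ' a, ha, map_sub, hb1, sub_self]
      have ha0 : a = 0 := by
        apply hιAinj; rw [h0, map_zero]
      rw [ha0, map_zero] at ha
      exact sub_eq_zero.mp ha.symm
    set K : Submodule R (↥(GA 0) × ↥(GC 0)) := LinearMap.range ιB with hK
    set π := K.mkQ with hπ
    set eA := (dA 0).rangeRestrict with heA
    set eC := (dC 0).rangeRestrict with heC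
    have heAsurj : Function.Surjective eA := (dA 0).surjective_rangeRestrict
    have heCsurj : Function.Surjective eC := (dC 0).surjective_rangeRestrict
    have hkerA : LinearMap.ker eA = LinearMap.range ιA := by
      rw [heA, LinearMap.ker_rangeRestrict, hA0]
    have hkerC : LinearMap.ker eC = LinearMap.range ιC := by
      rw [heC, LinearMap.ker_rangeRestrict, hC0]
    set f : ↥(GA 0) →ₗ[R] ((↥(GA 0) × ↥(GC 0)) ⧸ K) :=
      π ∘ₗ LinearMap.inl R ↥(GA 0) ↥(GC 0) with hf
    have hkf : LinearMap.ker eA ≤ LinearMap.ker f := by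
      rw [hkerA]
      rintro x ⟨a, rfl⟩
      have heq : ((ιA a, 0) : ↥(GA 0) × ↥(GC 0)) = ιB (i a) := by
        have hpa : p (i a) = 0 := by
          have : i a ∈ LinearMap.ker p := hexact ▸ LinearMap.mem_range_self i a
          simpa using this
        refine Prod.ext ?_ ?_
        · exact (hσ' a).symm
        · show (0 : ↥(GC 0)) = ιC (p (i a))
          rw [hpa, map_zero]
      show π (ιA a, 0) = 0
      rw [heq]
      exact (Submodule.Quotient.mk_eq_zero K).mpr (LinearMap.mem_range_self ιB (i a))
    obtain ⟨i1, hi1⟩ := factor_through_surjective R eA heAsurj f hkf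
    have hi1' : ∀ x, i1 (eA x) = π (x, 0) := fun x => LinearMap.congr_fun hi1 x
    have hi1inj : Function.Injective i1 := by
      intro z z' hz
      obtain ⟨x, rfl⟩ := heAsurj z
      obtain ⟨x', rfl⟩ := heAsurj z'
      have hxk : ((x - x', 0) : ↥(GA 0) × ↥(GC 0)) ∈ K := by
        have hfz : π (x - x', 0) = 0 := by
          have : π (x - x', 0) = π (x, 0) - π (x', 0) := by
            rw [← map_sub]
            congr 1
            simp
          rw [this, ← hi1' x, ← hi1' x', hz, sub_self]
        exact (Submodule.Quotient.mk_eq_zero K).mp hfz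
      obtain ⟨b, hb⟩ := hxk
      have hb1 : σ b = x - x' := (congrArg Prod.fst hb :)
      have hb2 : ιC (p b) = 0 := (congrArg Prod.snd hb :)
      have hpb : p b = 0 := by
        apply hιCinj; rw [hb2, map_zero]
      have hmem : b ∈ LinearMap.range i := hexact ▸ hpb
      obtain ⟨a, rfl⟩ := hmem
      have hxx : (x - x' : ↥(GA 0)) ∈ LinearMap.ker eA := by
        rw [hkerA]
        exact ⟨a, by rw [hσ' a] at hb1; exact hb1⟩
      have h0 : eA x - eA x' = 0 := by rw [← map_sub]; exact hxx
      exact sub_eq_zero.mp h0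
    set g : (↥(GA 0) × ↥(GC 0)) →ₗ[R] ↥(LinearMap.range (dC 0)) :=
      eC ∘ₗ LinearMap.snd R ↥(GA 0) ↥(GC 0) with hg
    have hKg : K ≤ LinearMap.ker g := by
      rintro _ ⟨b, rfl⟩
      show eC (ιC (p b)) = 0
      have : ιC (p b) ∈ LinearMap.ker eC := by rw [hkerC]; exact ⟨p b, rfl⟩
      exact this
    set p1 := K.liftQ g hKg with hp1def
    have hp1' : ∀ w, p1 (π w) = g w := fun w => by
      rw [hp1def, hπ]
      exact Submodule.liftQ_apply K g w
    have hp1surj : Function.Surjective p1 := by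
      intro z
      obtain ⟨y, rfl⟩ := heCsurj z
      exact ⟨π (0, y), by rw [hp1']; rfl⟩
    have hexact1 : LinearMap.range i1 = LinearMap.ker p1 := by
      apply le_antisymm
      · rintro _ ⟨z, rfl⟩
        obtain ⟨x, rfl⟩ := heAsurj z
        rw [LinearMap.mem_ker, hi1' x, hp1']
        show eC 0 = 0
        rw [map_zero]
      · intro w hw
        obtain ⟨⟨x, y⟩, rfl⟩ := Submodule.mkQ_surjective K w
        rw [LinearMap.mem_ker] at hw
        have hgxy : g (x, y) = 0 := by rw [← hp1' (x, y)]; exact hw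
        have hy : y ∈ LinearMap.ker eC := hgxy
        rw [hkerC] at hy
        obtain ⟨c, rfl⟩ := hy
        obtain ⟨b, rfl⟩ := hp c
        refine ⟨eA (x - σ b), ?_⟩
        rw [hi1' (x - σ b)]
        have hsum2 : ((x, ιC (p b)) : ↥(GA 0) × ↥(GC 0)) = (x - σ b, 0) + ιB b := by
          refine Prod.ext ?_ ?_
          · show x = x - σ b + σ b
            abel
          · show ιC (p b) = 0 + ιC (p b)
            rw [zero_add]
        show π (x - σ b, 0) = π (x, ιC (p b))
        rw [hsum2, map_add]
        have hπb : π (ιB b) = 0 := (Submodule.Quotient.mk_eq_zero K).mpr ⟨b, rfl⟩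
        rw [hπb, add_zero]
    have hHomExact1 : ∀ F' : ModuleCat.{u} R, F F' →
        ∀ φ : ↥(LinearMap.range (dA 0)) →ₗ[R] ↥F',
        ∃ ψ : ((↥(GA 0) × ↥(GC 0)) ⧸ K) →ₗ[R] ↥F', ψ ∘ₗ i1 = φ := by
      intro F' hF' φ
      set φt := φ ∘ₗ eA with hφt
      have hkp : LinearMap.ker p ≤ LinearMap.ker (φt ∘ₗ σ) := by
        intro b hb
        rw [← hexact] at hb
        obtain ⟨a, rfl⟩ := hb
        show φt (σ (i a)) = 0
        rw [hσ' a]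
        have hmem : ιA a ∈ LinearMap.ker eA := by rw [hkerA]; exact ⟨a, rfl⟩
        show φ (eA (ιA a)) = 0
        rw [show eA (ιA a) = 0 from hmem, map_zero]
      obtain ⟨γ, hγ⟩ := factor_through_surjective R p hp (φt ∘ₗ σ) hkp
      have hγ' : ∀ b, γ (p b) = φt (σ b) := fun b => LinearMap.congr_fun hγ b
      obtain ⟨β, hβ⟩ := (hGC' F' hF').1 γ
      have hβ' : ∀ c, β (ιC c) = γ c := fun c => LinearMap.congr_fun hβ c
      set ψt : (↥(GA 0) × ↥(GC 0)) →ₗ[R] ↥F' :=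
        φt ∘ₗ LinearMap.fst R ↥(GA 0) ↥(GC 0) - β ∘ₗ LinearMap.snd R ↥(GA 0) ↥(GC 0) with hψt
      have hKψ : K ≤ LinearMap.ker ψt := by
        rintro _ ⟨b, rfl⟩
        show φt (σ b) - β (ιC (p b)) = 0
        rw [hβ', hγ', sub_self]
      refine ⟨K.liftQ ψt hKψ, ?_⟩
      apply LinearMap.ext
      intro z
      obtain ⟨x, rfl⟩ := heAsurj z
      show K.liftQ ψt hKψ (i1 (eA x)) = φ (eA x)
      rw [hi1' x]
      have hlq : K.liftQ ψt hKψ (π (x, 0)) = ψt (x, 0) := by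
        rw [hπ]; exact Submodule.liftQ_apply K ψt (x, 0)
      rw [hlq]
      show φt x - β 0 = φ (eA x)
      rw [map_zero, sub_zero]
      rfl
    have hGA1 : IsFCoresolutionU R F n ↥(LinearMap.range (dA 0)) (fun j => GA (j + 1))
        (LinearMap.range (dA 0)).subtype (fun j => dA (j + 1)) := by
      refine ⟨fun j hj => hAF (j+1) (by omega), fun j hj => hAsub (j+1) (by omega),
        Submodule.injective_subtype _, ?_, fun j => hAd (j+1)⟩
      show LinearMap.ker (dA 1) = _
      rw [hAd 0, Submodule.range_subtype]
    have hGC1 : IsFCoresolutionU R F n ↥(LinearMap.range (dC 0)) (fun j => GC (j + 1))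
        (LinearMap.range (dC 0)).subtype (fun j => dC (j + 1)) := by
      refine ⟨fun j hj => hCF (j+1) (by omega), fun j hj => hCsub (j+1) (by omega),
        Submodule.injective_subtype _, ?_, fun j => hCd (j+1)⟩
      show LinearMap.ker (dC 1) = _
      rw [hCd 0, Submodule.range_subtype]
    obtain ⟨GB', ιB1, dB', hGB'⟩ :=
      IH ↥(LinearMap.range (dA 0)) ((↥(GA 0) × ↥(GC 0)) ⧸ K) ↥(LinearMap.range (dC 0))
        i1 p1 hi1inj hp1surj hexact1 hHomExact1
        (fun j => GA (j + 1)) (LinearMap.range (dA 0)).subtype (fun j => dA (j + 1)) hGA1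
        (fun F' hF' => ⟨fun φ => (hGA' F' hF').2 0 φ, fun j φ => (hGA' F' hF').2 (j+1) φ⟩)
        (fun j => GC (j + 1)) (LinearMap.range (dC 0)).subtype (fun j => dC (j + 1)) hGC1
        (fun F' hF' => ⟨fun φ => (hGC' F' hF').2 0 φ, fun j φ => (hGC' F' hF').2 (j+1) φ⟩)
    obtain ⟨hBF', hBsub', hιB1inj, hB'0, hBd'⟩ := hGB'
    refine ⟨fun j => match j with
        | 0 => ModuleCat.of R (↥(GA 0) × ↥(GC 0))
        | (j+1) => GB' j,
      ιB,
      fun j => match j with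
        | 0 => ιB1 ∘ₗ π
        | (j+1) => dB' j, ?_, ?_, hιBinj, ?_, ?_⟩
    · intro j hj
      match j with
      | 0 => exact hsum (GA 0) (GC 0) (hAF 0 (Nat.zero_le _)) (hCF 0 (Nat.zero_le _))
      | (j+1) => exact hBF' j (by omega)
    · intro j hj
      match j with
      | 0 => exact absurd hj (by omega)
      | (j+1) => exact hBsub' j (by omega)
    · show LinearMap.ker (ιB1 ∘ₗ π) = LinearMap.range ιB
      rw [LinearMap.ker_comp, LinearMap.ker_eq_bot.mpr hιB1inj, Submodule.comap_bot,
        hπ, Submodule.ker_mkQ]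
    · intro j
      match j with
      | 0 =>
        show LinearMap.ker (dB' 0) = LinearMap.range (ιB1 ∘ₗ π)
        rw [hB'0, LinearMap.range_comp, hπ, Submodule.range_mkQ, Submodule.map_top]
      | (j+1) =>
        exact hBd' j

universe v

theorem stmt16V (F : ModuleCat.{v} R → Prop)
    (hsum : ∀ X Y : ModuleCat.{v} R, F X → F Y → F (ModuleCat.of R (↥X × ↥Y)))
    (A B C : Type) [AddCommGroup A] [Module R A] [AddCommGroup B] [Module R B]
    [AddCommGroup C] [Module R C]
    (i : A →ₗ[R] B) (p : B →ₗ[R] C)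
    (hi : Function.Injective i) (hp : Function.Surjective p)
    (hexact : LinearMap.range i = LinearMap.ker p)
    (hHomExact : ∀ F' : ModuleCat.{v} R, F F' → ∀ φ : A →ₗ[R] ↥F',
      ∃ ψ : B →ₗ[R] ↥F', ψ ∘ₗ i = φ)
    (n : ℕ)
    (GA : ℕ → ModuleCat.{v} R) (ιA : A →ₗ[R] ↥(GA 0)) (dA : ∀ j, ↥(GA j) →ₗ[R] ↥(GA (j + 1)))
    (hGA : IsFCoresolution R F n A GA ιA dA)
    (hGA' : IsProperCoresolution R F A GA ιA dA)
    (GC : ℕ → ModuleCat.{v} R) (ιC : C →ₗ[R] ↥(GC 0)) (dC : ∀ j, ↥(GC j) →ₗ[R] ↥(GC (j + 1)))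
    (hGC : IsFCoresolution R F n C GC ιC dC)
    (hGC' : IsProperCoresolution R F C GC ιC dC) :
    ∃ (GB : ℕ → ModuleCat.{v} R) (ιB : B →ₗ[R] ↥(GB 0))
      (dB : ∀ j, ↥(GB j) →ₗ[R] ↥(GB (j + 1))),
      IsFCoresolution R F n B GB ιB dB := by
  -- transport everything along `ULift` so that the induction (auxStmt) applies
  obtain ⟨hAF, hAsub, hιAinj, hA0, hAd⟩ := hGA
  obtain ⟨hCF, hCsub, hιCinj, hC0, hCd⟩ := hGC
  let eA : ULift.{v} A ≃ₗ[R] A := ULift.moduleEquiv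
  let eB : ULift.{v} B ≃ₗ[R] B := ULift.moduleEquiv
  let eC : ULift.{v} C ≃ₗ[R] C := ULift.moduleEquiv
  let i' : ULift.{v} A →ₗ[R] ULift.{v} B :=
    (eB.symm : B →ₗ[R] ULift.{v} B) ∘ₗ i ∘ₗ (eA : ULift.{v} A →ₗ[R] A)
  let p' : ULift.{v} B →ₗ[R] ULift.{v} C :=
    (eC.symm : C →ₗ[R] ULift.{v} C) ∘ₗ p ∘ₗ (eB : ULift.{v} B →ₗ[R] B)
  have hi' : Function.Injective i' := by
    intro a a' h
    exact eA.injective (hi (eB.symm.injective h))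
  have hp' : Function.Surjective p' := by
    intro c
    obtain ⟨b, hb⟩ := hp (eC c)
    refine ⟨eB.symm b, ?_⟩
    show eC.symm (p (eB (eB.symm b))) = c
    rw [eB.apply_symm_apply, hb, eC.symm_apply_apply]
  have hex' : LinearMap.range i' = LinearMap.ker p' := by
    ext x
    constructor
    · rintro ⟨a, rfl⟩
      show eC.symm (p (eB (eB.symm (i (eA a))))) = 0
      rw [eB.apply_symm_apply]
      have hm : i (eA a) ∈ LinearMap.ker p := hexact ▸ LinearMap.mem_range_self i (eA a)
      rw [LinearMap.mem_ker] at hm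
      rw [hm, map_zero]
    · intro hx
      have h0 : p (eB x) = 0 := by
        have h1 : eC.symm (p (eB x)) = eC.symm 0 := by
          rw [map_zero]; exact hx
        exact eC.symm.injective h1
      have hm : eB x ∈ LinearMap.range i := hexact ▸ h0
      obtain ⟨a, ha⟩ := hm
      refine ⟨eA.symm a, ?_⟩
      show eB.symm (i (eA (eA.symm a))) = x
      rw [eA.apply_symm_apply, ha, eB.symm_apply_apply]
  have hhe' : ∀ F' : ModuleCat.{v} R, F F' → ∀ φ : ULift.{v} A →ₗ[R] ↥F',
      ∃ ψ : ULift.{v} B →ₗ[R] ↥F', ψ ∘ₗ i' = φ := by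
    intro F' hF' φ
    obtain ⟨ψ, hψ⟩ := hHomExact F' hF' (φ ∘ₗ (eA.symm : A →ₗ[R] ULift.{v} A))
    refine ⟨ψ ∘ₗ (eB : ULift.{v} B →ₗ[R] B), ?_⟩
    apply LinearMap.ext
    intro a
    show ψ (eB (eB.symm (i (eA a)))) = φ a
    rw [eB.apply_symm_apply]
    have h2 := LinearMap.congr_fun hψ (eA a)
    exact h2.trans (by show φ (eA.symm (eA a)) = φ a; rw [eA.symm_apply_apply])
  -- transported coresolution of A
  have hrA : LinearMap.range (ιA ∘ₗ (eA : ULift.{v} A →ₗ[R] A)) = LinearMap.range ιA := by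
    ext z
    constructor
    · rintro ⟨a, rfl⟩
      exact ⟨eA a, rfl⟩
    · rintro ⟨a, rfl⟩
      exact ⟨eA.symm a, by show ιA (eA (eA.symm a)) = ιA a; rw [eA.apply_symm_apply]⟩
  have hGAU : IsFCoresolutionU R F n (ULift.{v} A) GA
      (ιA ∘ₗ (eA : ULift.{v} A →ₗ[R] A)) dA := by
    refine ⟨hAF, hAsub, ?_, ?_, hAd⟩
    · intro a a' h
      exact eA.injective (hιAinj h)
    · rw [hA0, hrA]
  have hGAU' : ∀ F' : ModuleCat.{v} R, F F' →
      (∀ φ : ULift.{v} A →ₗ[R] ↥F', ∃ ψ : ↥(GA 0) →ₗ[R] ↥F',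
        ψ ∘ₗ (ιA ∘ₗ (eA : ULift.{v} A →ₗ[R] A)) = φ) ∧
      ∀ (j : ℕ) (φ : ↥(LinearMap.range (dA j)) →ₗ[R] ↥F'),
        ∃ ψ : ↥(GA (j + 1)) →ₗ[R] ↥F', ψ ∘ₗ (LinearMap.range (dA j)).subtype = φ := by
    intro F' hF'
    refine ⟨?_, (hGA' F' hF').2⟩
    intro φ
    obtain ⟨ψ, hψ⟩ := (hGA' F' hF').1 (φ ∘ₗ (eA.symm : A →ₗ[R] ULift.{v} A))
    refine ⟨ψ, ?_⟩
    apply LinearMap.ext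
    intro a
    show ψ (ιA (eA a)) = φ a
    have h2 := LinearMap.congr_fun hψ (eA a)
    exact h2.trans (by show φ (eA.symm (eA a)) = φ a; rw [eA.symm_apply_apply])
  -- transported coresolution of C
  have hrC : LinearMap.range (ιC ∘ₗ (eC : ULift.{v} C →ₗ[R] C)) = LinearMap.range ιC := by
    ext z
    constructor
    · rintro ⟨c, rfl⟩
      exact ⟨eC c, rfl⟩
    · rintro ⟨c, rfl⟩
      exact ⟨eC.symm c, by show ιC (eC (eC.symm c)) = ιC c; rw [eC.apply_symm_apply]⟩
  have hGCU : IsFCoresolutionU R F n (ULift.{v} C) GC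
      (ιC ∘ₗ (eC : ULift.{v} C →ₗ[R] C)) dC := by
    refine ⟨hCF, hCsub, ?_, ?_, hCd⟩
    · intro c c' h
      exact eC.injective (hιCinj h)
    · rw [hC0, hrC]
  have hGCU' : ∀ F' : ModuleCat.{v} R, F F' →
      (∀ φ : ULift.{v} C →ₗ[R] ↥F', ∃ ψ : ↥(GC 0) →ₗ[R] ↥F',
        ψ ∘ₗ (ιC ∘ₗ (eC : ULift.{v} C →ₗ[R] C)) = φ) ∧
      ∀ (j : ℕ) (φ : ↥(LinearMap.range (dC j)) →ₗ[R] ↥F'),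
        ∃ ψ : ↥(GC (j + 1)) →ₗ[R] ↥F', ψ ∘ₗ (LinearMap.range (dC j)).subtype = φ := by
    intro F' hF'
    refine ⟨?_, (hGC' F' hF').2⟩
    intro φ
    obtain ⟨ψ, hψ⟩ := (hGC' F' hF').1 (φ ∘ₗ (eC.symm : C →ₗ[R] ULift.{v} C))
    refine ⟨ψ, ?_⟩
    apply LinearMap.ext
    intro c
    show ψ (ιC (eC c)) = φ c
    have h2 := LinearMap.congr_fun hψ (eC c)
    exact h2.trans (by show φ (eC.symm (eC c)) = φ c; rw [eC.symm_apply_apply])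
  obtain ⟨GB, ιB', dB, hBF, hBsub, hBinj, hB0, hBd⟩ :=
    auxStmt R F hsum n (ULift.{v} A) (ULift.{v} B) (ULift.{v} C) i' p' hi' hp' hex' hhe'
      GA (ιA ∘ₗ (eA : ULift.{v} A →ₗ[R] A)) dA hGAU hGAU'
      GC (ιC ∘ₗ (eC : ULift.{v} C →ₗ[R] C)) dC hGCU hGCU'
  refine ⟨GB, ιB' ∘ₗ (eB.symm : B →ₗ[R] ULift.{v} B), dB, hBF, hBsub, ?_, ?_, hBd⟩
  · intro b b' h
    exact eB.symm.injective (hBinj h)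
  · rw [hB0]
    ext z
    constructor
    · rintro ⟨b, rfl⟩
      exact ⟨eB b, by show ιB' (eB.symm (eB b)) = ιB' b; rw [eB.symm_apply_apply]⟩
    · rintro ⟨b, rfl⟩
      exact ⟨eB.symm b, rfl⟩


/-- generalized horseshoe lemma for coresolutions: if `F` is closed
under finite direct sums, `0 → A → B → C → 0` is a `Hom_R(−, F)`-exact exact
sequence, and `A` and `C` admit (proper) `F`-coresolutions of length at most `n`,
then `B` admits an `F`-coresolution of length at most `n`. -/
theorem stmt16 (F : ModuleCat R → Prop)
    (hsum : ∀ X Y : ModuleCat R, F X → F Y → F (ModuleCat.of R (↥X × ↥Y)))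
    (A B C : Type) [AddCommGroup A] [Module R A] [AddCommGroup B] [Module R B]
    [AddCommGroup C] [Module R C]
    (i : A →ₗ[R] B) (p : B →ₗ[R] C)
    (hi : Function.Injective i) (hp : Function.Surjective p)
    (hexact : LinearMap.range i = LinearMap.ker p)
    (hHomExact : ∀ F' : ModuleCat R, F F' → ∀ φ : A →ₗ[R] ↥F',
      ∃ ψ : B →ₗ[R] ↥F', ψ ∘ₗ i = φ)
    (n : ℕ)
    (GA : ℕ → ModuleCat R) (ιA : A →ₗ[R] ↥(GA 0)) (dA : ∀ j, ↥(GA j) →ₗ[R] ↥(GA (j + 1)))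
    (hGA : IsFCoresolution R F n A GA ιA dA)
    (hGA' : IsProperCoresolution R F A GA ιA dA)
    (GC : ℕ → ModuleCat R) (ιC : C →ₗ[R] ↥(GC 0)) (dC : ∀ j, ↥(GC j) →ₗ[R] ↥(GC (j + 1)))
    (hGC : IsFCoresolution R F n C GC ιC dC)
    (hGC' : IsProperCoresolution R F C GC ιC dC) :
    ∃ (GB : ℕ → ModuleCat R) (ιB : B →ₗ[R] ↥(GB 0))
      (dB : ∀ j, ↥(GB j) →ₗ[R] ↥(GB (j + 1))),
      IsFCoresolution R F n B GB ιB dB :=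
  stmt16V R F hsum A B C i p hi hp hexact hHomExact n GA ιA dA hGA hGA' GC ιC dC hGC hGC'
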